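/- For z ∈ ℂ with Re z > −1 and any Schwartz function g ∈ S(ℝ), the integral ∫_0^∞ e^{−iμτ} τ^z g(τ) dτ satisfies the bound |∫_0^∞ e^{−iμτ} τ^z g(τ) dτ| ≤ C (1 + μ)^{−Re z − 1} for all μ ≥ 0, where C depends only on z and g. -/

import Mathlib

/-!
Write `a = μ⁻¹` and split `∫_0^∞ = ∫_0^a + ∫_a^∞`. Near the origin the trivial bound
`∫_0^a τ^{Re z} ‖g‖ ≲ a^{Re z + 1}` already has the right size. On `(a, ∞)` integrate by parts
against `e^{-iμτ}`: since `(τ^w g)' = τ^{w-1} (w g + τ g')`, this trades `∫_a^∞ e^{-iμτ} τ^w g` for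
`μ⁻¹` times a boundary term `a^{Re w} ‖g(a)‖` and the same tail integral with `w - 1` and another
Schwartz function. After finitely many steps `Re w < -1`, and then the tail is trivially
`≲ a^{Re w + 1}`. Every step carries the same power `μ^{-Re z - 1}`. For bounded `μ` the integral is
bounded by `∫_0^∞ τ^{Re z} ‖g‖ < ∞`.
-/

open MeasureTheory Set Filter Complex
open scoped SchwartzMap Topology

noncomputable section

namespace SchwartzMap

variable {F : Type*} [NormedAddCommGroup F] [NormedSpace ℝ F]

lemma integrableOn_Ioi_zero_rpow_mul_norm (g : 𝓢(ℝ, F)) {s : ℝ} (hs : -1 < s) :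
    IntegrableOn (fun τ : ℝ => τ ^ s * ‖g τ‖) (Ioi 0) := by
  have hg_top : (fun τ => ‖g τ‖) =O[atTop] (· ^ (-(s + 2))) := by
    refine ((g.isBigO_cocompact_rpow (-(s + 2))).norm_left.mono atTop_le_cocompact).congr'
      EventuallyEq.rfl ?_
    filter_upwards [eventually_ge_atTop 0] with τ hτ
    rw [Real.norm_of_nonneg hτ]
  have hg_bot : (fun τ => ‖g τ‖) =O[𝓝[>] 0] (· ^ (-0 : ℝ)) := by
    simpa using (g.continuous.norm.tendsto 0).isBigO_one ℝ |>.mono nhdsWithin_le_nhds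
  simpa using mellin_convergent_of_isBigO_scalar
    (g.continuous.norm.locallyIntegrable.locallyIntegrableOn _) hg_top (s := s + 1)
    (by linarith) hg_bot (by linarith)

lemma integrableOn_Ioi_rpow_mul_norm (g : 𝓢(ℝ, F)) (s : ℝ) {a : ℝ} (ha : 0 < a) :
    IntegrableOn (fun τ : ℝ => τ ^ s * ‖g τ‖) (Ioi a) := by
  refine (((g.integrableOn_Ioi_zero_rpow_mul_norm (s := max s 0)
    (by linarith [le_max_right s 0])).mono_set (Ioi_subset_Ioi ha.le)).const_mul
    (a ^ (s - max s 0))).mono' (by fun_prop) ?_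
  filter_upwards [ae_restrict_mem measurableSet_Ioi] with τ (hτ : a < τ)
  have hτ0 : 0 < τ := ha.trans hτ
  rw [Real.norm_of_nonneg (by positivity), ← mul_assoc]
  gcongr
  calc τ ^ s = τ ^ (s - max s 0) * τ ^ max s 0 := by rw [← Real.rpow_add hτ0]; ring_nf
    _ ≤ a ^ (s - max s 0) * τ ^ max s 0 := by
      have := Real.rpow_le_rpow_of_nonpos ha hτ.le (sub_nonpos.2 (le_max_left s 0))
      gcongr

end SchwartzMap

lemma exists_le_mul_one_add_rpow {F : ℝ → ℝ} {q C₀ C₁ : ℝ} (hq : q ≤ 0)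
    (h₀ : ∀ μ, 0 ≤ μ → F μ ≤ C₀) (h₁ : ∀ μ, 1 ≤ μ → F μ ≤ C₁ * μ ^ q) :
    ∃ C, 0 < C ∧ ∀ μ, 0 ≤ μ → F μ ≤ C * (1 + μ) ^ q := by
  refine ⟨(|C₀| + |C₁| + 1) * 2 ^ (-q), by positivity, fun μ hμ => ?_⟩
  rcases le_total μ 1 with hμ1 | hμ1
  · calc F μ ≤ |C₀| + |C₁| + 1 := by linarith [h₀ μ hμ, le_abs_self C₀, abs_nonneg C₁]
      _ = (|C₀| + |C₁| + 1) * 2 ^ (-q) * 2 ^ q := by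
        rw [mul_assoc, ← Real.rpow_add two_pos, neg_add_cancel, Real.rpow_zero, mul_one]
      _ ≤ (|C₀| + |C₁| + 1) * 2 ^ (-q) * (1 + μ) ^ q := by
        refine mul_le_mul_of_nonneg_left (Real.rpow_le_rpow_of_nonpos ?_ ?_ hq) (by positivity) <;>
          linarith
  · have hμ0 : 0 < μ := by linarith
    calc F μ ≤ C₁ * μ ^ q := h₁ μ hμ1
      _ ≤ (|C₀| + |C₁| + 1) * μ ^ q := by
        gcongr; linarith [le_abs_self C₁, abs_nonneg C₀]
      _ = (|C₀| + |C₁| + 1) * 2 ^ (-q) * (2 * μ) ^ q := by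
        rw [Real.mul_rpow zero_le_two hμ0.le, mul_assoc, ← mul_assoc (2 ^ (-q)),
          ← Real.rpow_add two_pos, neg_add_cancel, Real.rpow_zero, one_mul]
      _ ≤ (|C₀| + |C₁| + 1) * 2 ^ (-q) * (1 + μ) ^ q := by
        refine mul_le_mul_of_nonneg_left (Real.rpow_le_rpow_of_nonpos ?_ ?_ hq) (by positivity) <;>
          linarith

lemma inv_rpow_add_one {μ : ℝ} (hμ : 0 < μ) (r : ℝ) : μ⁻¹ ^ (r + 1) = μ ^ (-r - 1) := by
  rw [Real.inv_rpow hμ.le, ← Real.rpow_neg hμ.le, neg_add']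

def oscIntegrand (w : ℂ) (g : ℝ → ℂ) (μ τ : ℝ) : ℂ :=
  exp (-(I * μ * τ)) * (τ : ℂ) ^ w * g τ

def eulerOp (w : ℂ) (g : 𝓢(ℝ, ℂ)) : 𝓢(ℝ, ℂ) :=
  w • g + SchwartzMap.smulLeftCLM ℂ (fun x : ℝ => (x : ℂ)) (SchwartzMap.derivCLM ℝ ℂ g)

lemma eulerOp_apply (w : ℂ) (g : 𝓢(ℝ, ℂ)) (x : ℝ) :
    eulerOp w g x = w * g x + x * deriv g x := by
  have : (fun x : ℝ => (x : ℂ)).HasTemperateGrowth := by fun_prop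
  simp [eulerOp, this]

lemma norm_oscIntegrand (w : ℂ) (g : ℝ → ℂ) (μ : ℝ) {τ : ℝ} (hτ : 0 < τ) :
    ‖oscIntegrand w g μ τ‖ = τ ^ w.re * ‖g τ‖ := by
  rw [oscIntegrand, norm_mul, norm_mul, Complex.norm_exp, norm_cpow_eq_rpow_re_of_pos hτ]
  simp

lemma norm_setIntegral_oscIntegrand_le (w : ℂ) (μ : ℝ) {g : ℝ → ℂ} {B : ℝ}
    (hB : ∀ τ, ‖g τ‖ ≤ B) {s : Set ℝ} (hs : s ⊆ Ioi 0) (hs' : MeasurableSet s)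
    (hint : IntegrableOn (fun τ : ℝ => τ ^ w.re) s) :
    ‖∫ τ in s, oscIntegrand w g μ τ‖ ≤ B * ∫ τ in s, τ ^ w.re := by
  rw [← integral_const_mul]
  refine norm_integral_le_of_norm_le (hint.const_mul B) ?_
  filter_upwards [ae_restrict_mem hs'] with τ hτ
  rw [norm_oscIntegrand w g μ (hs hτ), mul_comm B]
  exact mul_le_mul_of_nonneg_left (hB τ) (Real.rpow_nonneg (hs hτ).le _)

lemma norm_integral_Ioc_zero_oscIntegrand_le (w : ℂ) (μ : ℝ) {g : ℝ → ℂ} {B : ℝ}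
    (hB : ∀ τ, ‖g τ‖ ≤ B) (hw : -1 < w.re) {a : ℝ} (ha : 0 ≤ a) :
    ‖∫ τ in Ioc 0 a, oscIntegrand w g μ τ‖ ≤ B / (w.re + 1) * a ^ (w.re + 1) := by
  have hint := intervalIntegral.intervalIntegrable_rpow' (a := 0) (b := a) hw
  rw [intervalIntegrable_iff_integrableOn_Ioc_of_le ha] at hint
  refine (norm_setIntegral_oscIntegrand_le w μ hB Ioc_subset_Ioi_self measurableSet_Ioc
    hint).trans_eq ?_
  rw [← intervalIntegral.integral_of_le ha, integral_rpow (Or.inl hw),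
    Real.zero_rpow (by linarith)]
  ring

lemma norm_integral_Ioi_oscIntegrand_le (w : ℂ) (μ : ℝ) {g : ℝ → ℂ} {B : ℝ}
    (hB : ∀ τ, ‖g τ‖ ≤ B) (hw : w.re < -1) {a : ℝ} (ha : 0 < a) :
    ‖∫ τ in Ioi a, oscIntegrand w g μ τ‖ ≤ B / (-(w.re + 1)) * a ^ (w.re + 1) := by
  refine (norm_setIntegral_oscIntegrand_le w μ hB (Ioi_subset_Ioi ha.le) measurableSet_Ioi
    (integrableOn_Ioi_rpow_of_lt hw ha)).trans_eq ?_
  rw [integral_Ioi_rpow_of_lt hw ha, div_neg]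
  ring

lemma integrableOn_oscIntegrand_of_subset_Ioi (w : ℂ) {g : ℝ → ℂ} (hg : Measurable g) (μ : ℝ)
    {s : Set ℝ} (hs : s ⊆ Ioi 0) (hs' : MeasurableSet s)
    (h : IntegrableOn (fun τ => τ ^ w.re * ‖g τ‖) s) :
    IntegrableOn (oscIntegrand w g μ) s := by
  refine h.mono' (by unfold oscIntegrand; fun_prop) ?_
  filter_upwards [ae_restrict_mem hs'] with τ hτ
  rw [norm_oscIntegrand w g μ (hs hτ)]

section

variable (w : ℂ) (g : 𝓢(ℝ, ℂ)) (μ : ℝ)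

lemma integrableOn_Ioi_oscIntegrand {a : ℝ} (ha : 0 < a) :
    IntegrableOn (oscIntegrand w g μ) (Ioi a) :=
  integrableOn_oscIntegrand_of_subset_Ioi w g.continuous.measurable μ (Ioi_subset_Ioi ha.le)
    measurableSet_Ioi (g.integrableOn_Ioi_rpow_mul_norm w.re ha)

lemma integrableOn_Ioi_zero_oscIntegrand (hw : -1 < w.re) :
    IntegrableOn (oscIntegrand w g μ) (Ioi 0) :=
  integrableOn_oscIntegrand_of_subset_Ioi w g.continuous.measurable μ subset_rfl
    measurableSet_Ioi (g.integrableOn_Ioi_zero_rpow_mul_norm hw)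

lemma norm_integral_Ioi_zero_oscIntegrand_le (hw : -1 < w.re) :
    ‖∫ τ in Ioi 0, oscIntegrand w g μ τ‖ ≤ ∫ τ in Ioi 0, τ ^ w.re * ‖g τ‖ := by
  refine norm_integral_le_of_norm_le (g.integrableOn_Ioi_zero_rpow_mul_norm hw) ?_
  filter_upwards [ae_restrict_mem measurableSet_Ioi] with τ hτ
  rw [norm_oscIntegrand w g μ hτ]

lemma hasDerivAt_oscIntegrand {τ : ℝ} (hτ : 0 < τ) :
    HasDerivAt (oscIntegrand w g μ)
      (-(I * μ) * oscIntegrand w g μ τ + oscIntegrand (w - 1) (eulerOp w g) μ τ) τ := by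
  have hexp : HasDerivAt (fun t : ℝ => exp (-(I * μ * t))) (-(I * μ) * exp (-(I * μ * τ))) τ := by
    simpa [mul_comm, neg_mul] using
      ((hasDerivAt_id (τ : ℂ)).const_mul (-(I * μ))).cexp.comp_ofReal
  have hpow : HasDerivAt (fun t : ℝ => (t : ℂ) ^ w) (w * (τ : ℂ) ^ (w - 1)) τ := by
    simpa using ((hasDerivAt_id (τ : ℂ)).cpow_const (ofReal_mem_slitPlane.2 hτ)).comp_ofReal
  refine ((hexp.mul hpow).mul g.differentiableAt.hasDerivAt).congr_deriv ?_
  have hτw : (τ : ℂ) ^ w = (τ : ℂ) ^ (w - 1) * τ := by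
    conv_lhs => rw [← sub_add_cancel w 1, cpow_add _ _ (by exact_mod_cast hτ.ne'), cpow_one]
  simp only [oscIntegrand, eulerOp_apply, Pi.mul_apply, hτw]
  ring

lemma integral_Ioi_oscIntegrand_ibp {a : ℝ} (ha : 0 < a) :
    I * μ * ∫ τ in Ioi a, oscIntegrand w g μ τ =
      oscIntegrand w g μ a + ∫ τ in Ioi a, oscIntegrand (w - 1) (eulerOp w g) μ τ := by
  have hK := integrableOn_Ioi_oscIntegrand w g μ ha
  have hK' := integrableOn_Ioi_oscIntegrand (w - 1) (eulerOp w g) μ ha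
  have hderiv : ∀ τ ∈ Ici a, HasDerivAt (oscIntegrand w g μ) _ τ :=
    fun τ hτ => hasDerivAt_oscIntegrand w g μ (ha.trans_le hτ)
  have hderiv_int := (hK.const_mul (-(I * μ))).add hK'
  have hftc := integral_Ioi_of_hasDerivAt_of_tendsto' hderiv hderiv_int
    (tendsto_zero_of_hasDerivAt_of_integrableOn_Ioi (fun τ hτ => hderiv τ (mem_Ici_of_Ioi hτ))
      hderiv_int hK)
  rw [integral_add (hK.const_mul _) hK', integral_const_mul] at hftc
  linear_combination -hftc

lemma norm_integral_Ioi_inv_oscIntegrand_le_of_eulerOp {C : ℝ} (hμ : 0 < μ)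
    (hC : ‖∫ τ in Ioi μ⁻¹, oscIntegrand (w - 1) (eulerOp w g) μ τ‖ ≤ C * μ ^ (-w.re)) :
    ‖∫ τ in Ioi μ⁻¹, oscIntegrand w g μ τ‖ ≤
      (SchwartzMap.seminorm ℂ 0 0 g + C) * μ ^ (-w.re - 1) := by
  have hboundary : ‖oscIntegrand w g μ μ⁻¹‖ ≤ SchwartzMap.seminorm ℂ 0 0 g * μ ^ (-w.re) := by
    rw [norm_oscIntegrand w g μ (inv_pos.2 hμ), Real.inv_rpow hμ.le, ← Real.rpow_neg hμ.le,
      mul_comm]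
    exact mul_le_mul_of_nonneg_right (g.norm_le_seminorm ℂ _) (by positivity)
  have hμ_mul : μ * ‖∫ τ in Ioi μ⁻¹, oscIntegrand w g μ τ‖ ≤
      (SchwartzMap.seminorm ℂ 0 0 g + C) * μ ^ (-w.re) :=
    calc μ * ‖∫ τ in Ioi μ⁻¹, oscIntegrand w g μ τ‖
        = ‖I * μ * ∫ τ in Ioi μ⁻¹, oscIntegrand w g μ τ‖ := by simp [abs_of_pos hμ]
      _ ≤ _ := by
        rw [integral_Ioi_oscIntegrand_ibp w g μ (inv_pos.2 hμ), add_mul]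
        exact (norm_add_le _ _).trans (add_le_add hboundary hC)
  rw [Real.rpow_sub_one hμ.ne', mul_div_assoc', le_div_iff₀ hμ]
  linarith

end

lemma exists_norm_integral_Ioi_inv_oscIntegrand_le (w : ℂ) (g : 𝓢(ℝ, ℂ)) :
    ∃ C, ∀ μ, 0 < μ → ‖∫ τ in Ioi μ⁻¹, oscIntegrand w g μ τ‖ ≤ C * μ ^ (-w.re - 1) := by
  obtain ⟨n, hn⟩ := exists_nat_gt (w.re + 1)
  induction n generalizing w g with
  | zero =>
    have hw : w.re < -1 := by push_cast at hn; linarith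
    refine ⟨SchwartzMap.seminorm ℂ 0 0 g / (-(w.re + 1)), fun μ hμ => ?_⟩
    simpa only [inv_rpow_add_one hμ] using
      norm_integral_Ioi_oscIntegrand_le w μ (g.norm_le_seminorm ℂ) hw (inv_pos.2 hμ)
  | succ n ih =>
    obtain ⟨C, hC⟩ := ih (w - 1) (eulerOp w g)
      (by push_cast at hn; simp only [sub_re, one_re]; linarith)
    refine ⟨SchwartzMap.seminorm ℂ 0 0 g + C,
      fun μ hμ => norm_integral_Ioi_inv_oscIntegrand_le_of_eulerOp w g μ hμ ?_⟩
    simpa using hC μ hμ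

lemma exists_norm_integral_Ioi_zero_oscIntegrand_le (w : ℂ) (g : 𝓢(ℝ, ℂ)) (hw : -1 < w.re) :
    ∃ C, ∀ μ, 0 < μ → ‖∫ τ in Ioi 0, oscIntegrand w g μ τ‖ ≤ C * μ ^ (-w.re - 1) := by
  obtain ⟨C, hC⟩ := exists_norm_integral_Ioi_inv_oscIntegrand_le w g
  refine ⟨SchwartzMap.seminorm ℂ 0 0 g / (w.re + 1) + C, fun μ hμ => ?_⟩
  have ha := inv_pos.2 hμ
  have hint := integrableOn_Ioi_zero_oscIntegrand w g μ hw
  have hhead := norm_integral_Ioc_zero_oscIntegrand_le w μ (g.norm_le_seminorm ℂ) hw ha.le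
  rw [inv_rpow_add_one hμ] at hhead
  rw [← Ioc_union_Ioi_eq_Ioi ha.le, setIntegral_union (Ioc_disjoint_Ioi le_rfl) measurableSet_Ioi
    (hint.mono_set Ioc_subset_Ioi_self) (hint.mono_set (Ioi_subset_Ioi ha.le)), add_mul]
  exact (norm_add_le _ _).trans (add_le_add hhead (hC μ hμ))

end

/-- For `Re z > -1` and a Schwartz function `g`, the oscillatory integral
`∫_0^∞ e^{-iμτ} τ^z g(τ) dτ` is bounded by `C (1 + μ)^{-Re z - 1}` for all `μ ≥ 0`. -/
theorem oscillatory_integral_homogeneous_bound (z : ℂ) (hz : -1 < z.re)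
    (g : SchwartzMap ℝ ℂ) :
    ∃ C : ℝ, 0 < C ∧ ∀ μ : ℝ, 0 ≤ μ →
      ‖∫ τ in Set.Ioi (0 : ℝ),
          Complex.exp (-(Complex.I * μ * τ)) * (τ : ℂ) ^ z * g τ‖ ≤
        C * (1 + μ) ^ (-z.re - 1) := by
  obtain ⟨C, hC⟩ := exists_norm_integral_Ioi_zero_oscIntegrand_le z g hz
  exact exists_le_mul_one_add_rpow (F := fun μ => ‖∫ τ in Ioi 0, oscIntegrand z g μ τ‖)
    (by linarith) (fun μ _ => norm_integral_Ioi_zero_oscIntegrand_le z g μ hz)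
    (fun μ hμ => hC μ (by linarith))
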